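/- Let τ ∈ ℂ with Im τ > 0, let n ≥ 1, and let ε₁, ε₂ : ℂ → Matrix n n ℂ be smooth doubly periodic maps (periodic with periods 1 and τ). Then c_β(ε₁, ε₂) = −c_β(ε₂, ε₁), i.e. ∫₀¹∫₀¹ tr(ε₁(x + yτ)·(∂̄ε₂)(x + yτ)) dx dy = −∫₀¹∫₀¹ tr(ε₂(x + yτ)·(∂̄ε₁)(x + yτ)) dx dy. (Skew-symmetry of the 2-cocycle c_β(ε₁, ε₂) = 2πi ∫_P β ∧ tr(ε₁ ∂̄ε₂) with β a holomorphic 1-form on the elliptic curve P, which centrally extends the two-dimensional current algebra of gauge transformations restricted to the anticanonical divisor of a complex surface.) -/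

import Mathlib

open MeasureTheory

attribute [local instance] Matrix.linftyOpNormedAddCommGroup Matrix.linftyOpNormedRing
  Matrix.linftyOpNormedAlgebra

/-- The `∂/∂z̄` derivative of a map `F : ℂ → gl(n,ℂ)`, via the real Fréchet
derivative: `∂̄F(z) = (1/2)·(DF(z)(1) + i·DF(z)(i))`. -/
noncomputable def dbar {n : ℕ} (F : ℂ → Matrix (Fin n) (Fin n) ℂ) (z : ℂ) :
    Matrix (Fin n) (Fin n) ℂ :=
  (1 / 2 : ℂ) • (fderiv ℝ F z 1 + Complex.I • fderiv ℝ F z Complex.I)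

/-- The 2-cocycle `c_β(ε₁, ε₂) = 2πi ∫_P β ∧ tr(ε₁ ∂̄ε₂)` on the elliptic curve
`P = ℂ/(ℤ + τℤ)`, written in the coordinates `z = x + yτ`, `0 ≤ x, y ≤ 1`:
`c_β(ε₁, ε₂) = ∫₀¹∫₀¹ tr(ε₁(x + yτ)·(∂̄ε₂)(x + yτ)) dx dy`. -/
noncomputable def cocycleBeta {n : ℕ} (τ : ℂ)
    (ε₁ ε₂ : ℂ → Matrix (Fin n) (Fin n) ℂ) : ℂ :=
  ∫ y in (0 : ℝ)..1, ∫ x in (0 : ℝ)..1,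
    (ε₁ ((x : ℂ) + (y : ℂ) * τ) * dbar ε₂ ((x : ℂ) + (y : ℂ) * τ)).trace

/-- trace as a continuous `ℝ`-linear map. -/
noncomputable def traceCLM (n : ℕ) : Matrix (Fin n) (Fin n) ℂ →L[ℝ] ℂ :=
  LinearMap.toContinuousLinearMap (Matrix.traceLinearMap (Fin n) ℝ ℂ)

@[simp] lemma traceCLM_apply {n : ℕ} (A : Matrix (Fin n) (Fin n) ℂ) :
    traceCLM n A = A.trace := rfl

/-- Fubini for continuous functions on `[0,1]²`. -/
lemma mySwapIntegral (F : ℝ → ℝ → ℂ) (hF : Continuous (Function.uncurry F)) :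
    ∫ y in (0:ℝ)..1, ∫ x in (0:ℝ)..1, F x y
      = ∫ x in (0:ℝ)..1, ∫ y in (0:ℝ)..1, F x y := by
  have h01 : (0:ℝ) ≤ 1 := zero_le_one
  rw [intervalIntegral.integral_of_le h01]
  simp only [intervalIntegral.integral_of_le h01]
  rw [← MeasureTheory.integral_integral_swap]
  rw [Measure.prod_restrict]
  apply ((hF.continuousOn.integrableOn_compact
    (isCompact_Icc.prod isCompact_Icc))).mono_set
  exact Set.prod_mono Set.Ioc_subset_Icc_self Set.Ioc_subset_Icc_self

/-- The integral of `∂̄g` over the fundamental domain vanishes for doubly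
periodic smooth scalar functions. -/
lemma integral_dbar_zero (τ : ℂ) (hτ : 0 < τ.im) (g : ℂ → ℂ)
    (hg : ContDiff ℝ (⊤ : ℕ∞) g)
    (hg1 : ∀ z, g (z + 1) = g z) (hgτ : ∀ z, g (z + τ) = g z) :
    (∫ y in (0:ℝ)..1, ∫ x in (0:ℝ)..1,
      (1/2 : ℂ) * (fderiv ℝ g ((x:ℂ) + (y:ℂ)*τ) 1
        + Complex.I * fderiv ℝ g ((x:ℂ) + (y:ℂ)*τ) Complex.I)) = 0 := by
  have hb : τ.im ≠ 0 := ne_of_gt hτ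
  have hDc : Continuous (fderiv ℝ g) := hg.continuous_fderiv (by simp)
  have haffc : Continuous (fun p : ℝ × ℝ => ((p.2 : ℂ) + (p.1 : ℂ) * τ)) := by
    continuity
  have hdiff : Differentiable ℝ g := hg.differentiable (by simp)
  -- continuity of directional derivatives
  have hC : ∀ v : ℂ, Continuous (fun p : ℝ × ℝ =>
      fderiv ℝ g ((p.2 : ℂ) + (p.1 : ℂ) * τ) v) :=
    fun v => (hDc.comp haffc).clm_apply continuous_const
  -- ∂x integral vanishes
  have h1 : ∀ y : ℝ, (∫ x in (0:ℝ)..1, fderiv ℝ g ((x:ℂ) + (y:ℂ)*τ) 1) = 0 := by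
    intro y
    have hder : ∀ x ∈ Set.uIcc (0:ℝ) 1,
        HasDerivAt (fun x : ℝ => g ((x:ℂ) + (y:ℂ)*τ))
          (fderiv ℝ g ((x:ℂ) + (y:ℂ)*τ) 1) x := by
      intro x _
      have haff : HasDerivAt (fun x : ℝ => ((x:ℂ) + (y:ℂ)*τ)) 1 x := by
        simpa using (Complex.ofRealCLM.hasDerivAt (x := x)).add_const ((y:ℂ)*τ)
      exact (hdiff ((x:ℂ) + (y:ℂ)*τ)).hasFDerivAt.comp_hasDerivAt x haff
    have hint : IntervalIntegrable
        (fun x : ℝ => fderiv ℝ g ((x:ℂ) + (y:ℂ)*τ) 1) volume 0 1 :=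
      (((hC 1).comp (continuous_const.prodMk continuous_id))).intervalIntegrable 0 1
    rw [intervalIntegral.integral_eq_sub_of_hasDerivAt hder hint]
    have : ((1:ℝ):ℂ) + (y:ℂ)*τ = ((y:ℂ)*τ) + 1 := by push_cast; ring
    rw [this, hg1]
    simp
  -- ∂y integral vanishes
  have h2 : ∀ x : ℝ, (∫ y in (0:ℝ)..1, fderiv ℝ g ((x:ℂ) + (y:ℂ)*τ) τ) = 0 := by
    intro x
    have hder : ∀ y ∈ Set.uIcc (0:ℝ) 1,
        HasDerivAt (fun y : ℝ => g ((x:ℂ) + (y:ℂ)*τ))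
          (fderiv ℝ g ((x:ℂ) + (y:ℂ)*τ) τ) y := by
      intro y _
      have haff : HasDerivAt (fun y : ℝ => ((x:ℂ) + (y:ℂ)*τ)) τ y := by
        simpa using ((Complex.ofRealCLM.hasDerivAt (x := y)).mul_const τ).const_add (x:ℂ)
      exact (hdiff ((x:ℂ) + (y:ℂ)*τ)).hasFDerivAt.comp_hasDerivAt y haff
    have hint : IntervalIntegrable
        (fun y : ℝ => fderiv ℝ g ((x:ℂ) + (y:ℂ)*τ) τ) volume 0 1 :=
      (((hC τ).comp (continuous_id.prodMk continuous_const))).intervalIntegrable 0 1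
    rw [intervalIntegral.integral_eq_sub_of_hasDerivAt hder hint]
    have e1 : ((x:ℂ) + ((1:ℝ):ℂ)*τ) = (x:ℂ) + τ := by push_cast; ring
    have e0 : ((x:ℂ) + ((0:ℝ):ℂ)*τ) = (x:ℂ) := by push_cast; ring
    rw [e1, e0, hgτ, sub_self]
  -- decompose I
  have hI : (Complex.I : ℂ) = (τ.im)⁻¹ • τ - (τ.re / τ.im) • (1:ℂ) := by
    apply Complex.ext <;>
      simp [Complex.smul_re, Complex.smul_im] <;> field_simp <;> ring
  set c₂ : ℂ := (1/2 : ℂ) * Complex.I * ((τ.im)⁻¹ : ℝ) with hc₂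
  set c₁ : ℂ := (1/2 : ℂ) * (1 - Complex.I * ((τ.re / τ.im : ℝ))) with hc₁
  have hpt : ∀ z : ℂ,
      (1/2 : ℂ) * (fderiv ℝ g z 1 + Complex.I * fderiv ℝ g z Complex.I)
        = c₁ * fderiv ℝ g z 1 + c₂ * fderiv ℝ g z τ := by
    intro z
    have : fderiv ℝ g z Complex.I
        = (τ.im)⁻¹ • fderiv ℝ g z τ - (τ.re / τ.im) • fderiv ℝ g z 1 := by
      conv_lhs => rw [hI]
      rw [map_sub, (fderiv ℝ g z).map_smul, (fderiv ℝ g z).map_smul]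
    rw [this, hc₁, hc₂]
    simp only [Complex.real_smul]
    push_cast
    ring
  calc (∫ y in (0:ℝ)..1, ∫ x in (0:ℝ)..1,
      (1/2 : ℂ) * (fderiv ℝ g ((x:ℂ) + (y:ℂ)*τ) 1
        + Complex.I * fderiv ℝ g ((x:ℂ) + (y:ℂ)*τ) Complex.I))
      = ∫ y in (0:ℝ)..1, ∫ x in (0:ℝ)..1,
          (c₁ * fderiv ℝ g ((x:ℂ) + (y:ℂ)*τ) 1
            + c₂ * fderiv ℝ g ((x:ℂ) + (y:ℂ)*τ) τ) := by
        apply intervalIntegral.integral_congr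
        intro y _
        apply intervalIntegral.integral_congr
        intro x _
        exact hpt _
    _ = ∫ y in (0:ℝ)..1, c₂ * ∫ x in (0:ℝ)..1,
          fderiv ℝ g ((x:ℂ) + (y:ℂ)*τ) τ := by
        apply intervalIntegral.integral_congr
        intro y _
        dsimp only
        have hi1 : IntervalIntegrable
            (fun x : ℝ => c₁ * fderiv ℝ g ((x:ℂ) + (y:ℂ)*τ) 1) volume 0 1 :=
          (continuous_const.mul ((hC 1).comp
            (continuous_const.prodMk continuous_id))).intervalIntegrable 0 1
        have hi2 : IntervalIntegrable
            (fun x : ℝ => c₂ * fderiv ℝ g ((x:ℂ) + (y:ℂ)*τ) τ) volume 0 1 :=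
          (continuous_const.mul ((hC τ).comp
            (continuous_const.prodMk continuous_id))).intervalIntegrable 0 1
        rw [intervalIntegral.integral_add hi1 hi2,
          intervalIntegral.integral_const_mul, intervalIntegral.integral_const_mul,
          h1 y, mul_zero, zero_add]
    _ = c₂ * ∫ y in (0:ℝ)..1, ∫ x in (0:ℝ)..1,
          fderiv ℝ g ((x:ℂ) + (y:ℂ)*τ) τ := by
        rw [intervalIntegral.integral_const_mul]
    _ = 0 := by
        rw [mySwapIntegral _ (by
          have := hC τ
          exact this.comp (continuous_swap))]
        simp only [h2]
        simp

/-- Skew-symmetry of the 2-cocycle `c_β` on the two-dimensional current algebra: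
for smooth doubly periodic `ε₁, ε₂ : ℂ → gl(n,ℂ)` (periods `1` and `τ`, `Im τ > 0`),
`c_β(ε₁, ε₂) = −c_β(ε₂, ε₁)`. -/
theorem cocycleBeta_skew_symm (τ : ℂ) (hτ : 0 < τ.im) (n : ℕ) (hn : 1 ≤ n)
    (ε₁ ε₂ : ℂ → Matrix (Fin n) (Fin n) ℂ)
    (h₁ : ContDiff ℝ (⊤ : ℕ∞) ε₁) (h₂ : ContDiff ℝ (⊤ : ℕ∞) ε₂)
    (hp₁ : ∀ z : ℂ, ε₁ (z + 1) = ε₁ z ∧ ε₁ (z + τ) = ε₁ z)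
    (hp₂ : ∀ z : ℂ, ε₂ (z + 1) = ε₂ z ∧ ε₂ (z + τ) = ε₂ z) :
    cocycleBeta τ ε₁ ε₂ = -cocycleBeta τ ε₂ ε₁ := by
  set f : ℂ → ℂ := fun w => (ε₁ w * ε₂ w).trace with hf
  have hfC : ContDiff ℝ (⊤ : ℕ∞) f :=
    (traceCLM n).contDiff.comp (h₁.mul h₂)
  have hf1 : ∀ z, f (z + 1) = f z := fun z => by
    simp only [hf, (hp₁ z).1, (hp₂ z).1]
  have hfτ : ∀ z, f (z + τ) = f z := fun z => by
    simp only [hf, (hp₁ z).2, (hp₂ z).2]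
  -- pointwise identity
  have hpt : ∀ z : ℂ,
      (ε₁ z * dbar ε₂ z).trace + (ε₂ z * dbar ε₁ z).trace
        = (1/2 : ℂ) * (fderiv ℝ f z 1 + Complex.I * fderiv ℝ f z Complex.I) := by
    intro z
    have H1 := (h₁.differentiable (by simp) z).hasFDerivAt
    have H2 := (h₂.differentiable (by simp) z).hasFDerivAt
    have Hm := H1.mul' H2
    have Hf : HasFDerivAt f ((traceCLM n).comp
        (ε₁ z • fderiv ℝ ε₂ z + (fderiv ℝ ε₁ z).smulRight (ε₂ z))) z :=
      ((traceCLM n).hasFDerivAt.comp z Hm)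
    have hfd := Hf.fderiv
    rw [hfd]
    simp only [ContinuousLinearMap.coe_comp', Function.comp_apply,
      ContinuousLinearMap.add_apply, ContinuousLinearMap.smul_apply,
      ContinuousLinearMap.smulRight_apply, traceCLM_apply, dbar]
    simp only [smul_eq_mul, Matrix.mul_add, Matrix.mul_smul, Matrix.trace_add,
      Matrix.trace_smul, Matrix.trace_mul_comm (fderiv ℝ ε₁ z 1) (ε₂ z),
      Matrix.trace_mul_comm (fderiv ℝ ε₁ z Complex.I) (ε₂ z), smul_eq_mul]
    ring
  -- continuity facts
  have hdb : ∀ (ε : ℂ → Matrix (Fin n) (Fin n) ℂ), ContDiff ℝ (⊤:ℕ∞) ε →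
      Continuous (dbar ε) := by
    intro ε hε
    have hD := hε.continuous_fderiv (by simp)
    exact ((hD.clm_apply continuous_const).add
      (((hD.clm_apply continuous_const)).const_smul Complex.I)).const_smul (1 / 2 : ℂ)
  have haffc : Continuous (fun p : ℝ × ℝ => ((p.2 : ℂ) + (p.1 : ℂ) * τ)) := by
    continuity
  have hAcont : Continuous (Function.uncurry fun (y x : ℝ) =>
      (ε₁ ((x:ℂ) + (y:ℂ)*τ) * dbar ε₂ ((x:ℂ) + (y:ℂ)*τ)).trace) :=
    (traceCLM n).continuous.comp
      (((h₁.continuous.comp haffc).mul ((hdb ε₂ h₂).comp haffc)))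
  have hBcont : Continuous (Function.uncurry fun (y x : ℝ) =>
      (ε₂ ((x:ℂ) + (y:ℂ)*τ) * dbar ε₁ ((x:ℂ) + (y:ℂ)*τ)).trace) :=
    (traceCLM n).continuous.comp
      (((h₂.continuous.comp haffc).mul ((hdb ε₁ h₁).comp haffc)))
  have key : cocycleBeta τ ε₁ ε₂ + cocycleBeta τ ε₂ ε₁ = 0 := by
    unfold cocycleBeta
    have hIA : IntervalIntegrable (fun y : ℝ => ∫ x in (0:ℝ)..1,
        (ε₁ ((x:ℂ) + (y:ℂ)*τ) * dbar ε₂ ((x:ℂ) + (y:ℂ)*τ)).trace) volume 0 1 :=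
      (intervalIntegral.continuous_parametric_intervalIntegral_of_continuous'
        hAcont 0 1).intervalIntegrable 0 1
    have hIB : IntervalIntegrable (fun y : ℝ => ∫ x in (0:ℝ)..1,
        (ε₂ ((x:ℂ) + (y:ℂ)*τ) * dbar ε₁ ((x:ℂ) + (y:ℂ)*τ)).trace) volume 0 1 :=
      (intervalIntegral.continuous_parametric_intervalIntegral_of_continuous'
        hBcont 0 1).intervalIntegrable 0 1
    rw [← intervalIntegral.integral_add hIA hIB]
    have step : (∫ y in (0:ℝ)..1,
        ((∫ x in (0:ℝ)..1, (ε₁ ((x:ℂ) + (y:ℂ)*τ) * dbar ε₂ ((x:ℂ) + (y:ℂ)*τ)).trace)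
          + ∫ x in (0:ℝ)..1, (ε₂ ((x:ℂ) + (y:ℂ)*τ) * dbar ε₁ ((x:ℂ) + (y:ℂ)*τ)).trace))
        = ∫ y in (0:ℝ)..1, ∫ x in (0:ℝ)..1,
            (1/2 : ℂ) * (fderiv ℝ f ((x:ℂ) + (y:ℂ)*τ) 1
              + Complex.I * fderiv ℝ f ((x:ℂ) + (y:ℂ)*τ) Complex.I) := by
      apply intervalIntegral.integral_congr
      intro y _
      dsimp only
      have hiA : IntervalIntegrable (fun x : ℝ =>
          (ε₁ ((x:ℂ) + (y:ℂ)*τ) * dbar ε₂ ((x:ℂ) + (y:ℂ)*τ)).trace) volume 0 1 :=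
        ((hAcont.comp (continuous_const.prodMk continuous_id))).intervalIntegrable 0 1
      have hiB : IntervalIntegrable (fun x : ℝ =>
          (ε₂ ((x:ℂ) + (y:ℂ)*τ) * dbar ε₁ ((x:ℂ) + (y:ℂ)*τ)).trace) volume 0 1 :=
        ((hBcont.comp (continuous_const.prodMk continuous_id))).intervalIntegrable 0 1
      rw [← intervalIntegral.integral_add hiA hiB]
      apply intervalIntegral.integral_congr
      intro x _
      exact hpt _
    rw [step]
    exact integral_dbar_zero τ hτ f hfC hf1 hfτ
  exact eq_neg_of_add_eq_zero_left key
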